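/- The packing chromatic number of the corona C_n ⊙ K_1 equals 4 if n ∈ {3,4}, and equals 5 if n ≥ 5. -/

import Mathlib

open SimpleGraph

/-- A packing `k`-coloring of a graph: colors in `{1,…,k}`, and distinct vertices
with the same color `i` are at distance greater than `i`. -/
def IsPackingColoring {V : Type*} (G : SimpleGraph V) (k : ℕ) (c : V → ℕ) : Prop :=
  (∀ v, 1 ≤ c v ∧ c v ≤ k) ∧
  ∀ u v : V, u ≠ v → c u = c v → (c u : ℕ∞) < G.edist u v

/-- The packing chromatic number. -/
noncomputable def packingChromaticNumber {V : Type*} (G : SimpleGraph V) : ℕ :=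
  sInf {k | ∃ c, IsPackingColoring G k c}

/-- The generalized corona `G ⊙ pK₁`: add `p` pendant neighbors to each vertex. -/
def genCorona {V : Type*} (G : SimpleGraph V) (p : ℕ) : SimpleGraph (V ⊕ V × Fin p) where
  Adj x y :=
    (∃ u v, x = Sum.inl u ∧ y = Sum.inl v ∧ G.Adj u v) ∨
    (∃ u j, x = Sum.inl u ∧ y = Sum.inr (u, j)) ∨
    (∃ u j, x = Sum.inr (u, j) ∧ y = Sum.inl u)
  symm := by
    constructor
    rintro x y (⟨u, v, rfl, rfl, h⟩ | ⟨u, j, rfl, rfl⟩ | ⟨u, j, rfl, rfl⟩)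
    · exact Or.inl ⟨v, u, rfl, rfl, h.symm⟩
    · exact Or.inr (Or.inr ⟨u, j, rfl, rfl⟩)
    · exact Or.inr (Or.inl ⟨u, j, rfl, rfl⟩)
  loopless := by
    constructor
    rintro x (⟨u, v, rfl, h1, h⟩ | ⟨u, j, rfl, h1⟩ | ⟨u, j, rfl, h1⟩)
    · cases h1; exact G.ne_of_adj h rfl
    · exact absurd h1 (by simp)
    · exact absurd h1 (by simp)

/-- `A` is an orientation of `G`: each edge gets exactly one direction. -/
def IsOrientation {V : Type*} (G : SimpleGraph V) (A : V → V → Prop) : Prop :=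
  (∀ u v, A u v → ¬ A v u) ∧ (∀ u v, G.Adj u v ↔ (A u v ∨ A v u))

/-- Existence of a directed path of length `n` from `u` to `v`. -/
def DPath {V : Type*} (A : V → V → Prop) : ℕ → V → V → Prop
  | 0, u, v => u = v
  | (n+1), u, v => ∃ w, A u w ∧ DPath A n w v

/-- The weak directed distance: length of a shortest directed path joining `u` and `v`
in either direction. -/
noncomputable def wdist {V : Type*} (A : V → V → Prop) (u v : V) : ℕ∞ :=
  sInf {m : ℕ∞ | ∃ n : ℕ, m = n ∧ (DPath A n u v ∨ DPath A n v u)}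

/-- A packing `k`-coloring of a digraph, w.r.t. the weak directed distance. -/
def IsDPackingColoring {V : Type*} (A : V → V → Prop) (k : ℕ) (c : V → ℕ) : Prop :=
  (∀ v, 1 ≤ c v ∧ c v ≤ k) ∧
  ∀ u v : V, u ≠ v → c u = c v → (c u : ℕ∞) < wdist A u v

/-- The packing chromatic number of a digraph. -/
noncomputable def dPackingChromaticNumber {V : Type*} (A : V → V → Prop) : ℕ :=
  sInf {k | ∃ c, IsDPackingColoring A k c}

/-- A source: no incoming arcs. -/
def IsSource {V : Type*} (A : V → V → Prop) (v : V) : Prop := ∀ u, ¬ A u v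

/-- A sink: no outgoing arcs. -/
def IsSink {V : Type*} (A : V → V → Prop) (v : V) : Prop := ∀ u, ¬ A v u

/-!
In `C_n ⊙ K_1` two distinct vertices are at distance `d + ℓ + ℓ'`, where `d` is the cyclic
distance of their positions on the cycle and `ℓ, ℓ'` are `1` for a leaf and `0` for a cycle
vertex. A coloring is thus a pattern of (hub color, leaf color) pairs along the cycle, and it is a
packing `k`-coloring iff the pairs at cyclic distance `t ≤ k` satisfy four inequalities.

Upper bounds are explicit patterns. For `n ≥ 5` the period `(1,4) (2,1) (1,5) (3,1)` is followed
by a block of length `4 + n % 4`; from `n ≥ 16` on, every pair of positions at offset `≤ 5` in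
the pattern for `n + 4` also occurs in the pattern for `n`, so finitely many checks suffice.
Lower bounds are exhaustive searches: no 3-pattern for `n = 3, 4`, no 4-pattern for
`5 ≤ n ≤ 9`, and no 4-pattern even on ten consecutive positions of the cycle, which settles
`n ≥ 10`.
-/

theorem SimpleGraph.Walk.natAbs_sub_le_length {V : Type*} {G : SimpleGraph V} {f : V → ℤ}
    (hf : ∀ a b, G.Adj a b → (f a - f b).natAbs ≤ 1) {u v : V} (w : G.Walk u v) :
    (f u - f v).natAbs ≤ w.length := by
  induction w with
  | nil => simp
  | cons h _ ih =>
    have := hf _ _ h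
    rw [Walk.length_cons]
    omega

theorem SimpleGraph.natAbs_sub_le_edist {V : Type*} {G : SimpleGraph V} {f : V → ℤ}
    (hf : ∀ a b, G.Adj a b → (f a - f b).natAbs ≤ 1) (u v : V) :
    ((f u - f v).natAbs : ℕ∞) ≤ G.edist u v := by
  rcases eq_or_ne (G.edist u v) ⊤ with h | h
  · simp [h]
  obtain ⟨w, hw⟩ := exists_walk_of_edist_ne_top h
  rw [← hw]
  exact_mod_cast w.natAbs_sub_le_length hf

namespace genCorona

variable {V : Type*} {p : ℕ}

def base : V ⊕ V × Fin p → V := Sum.elim id Prod.fst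

def level : V ⊕ V × Fin p → ℕ := Sum.elim (fun _ => 0) (fun _ => 1)

@[simp] theorem base_inl (v : V) : base (.inl v : V ⊕ V × Fin p) = v := rfl
@[simp] theorem base_inr (x : V × Fin p) : base (.inr x : V ⊕ V × Fin p) = x.1 := rfl
@[simp] theorem level_inl (v : V) : level (.inl v : V ⊕ V × Fin p) = 0 := rfl
@[simp] theorem level_inr (x : V × Fin p) : level (.inr x : V ⊕ V × Fin p) = 1 := rfl

variable (G : SimpleGraph V)

def inlHom : G →g genCorona G p := ⟨Sum.inl, fun h => Or.inl ⟨_, _, rfl, rfl, h⟩⟩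

theorem adj_inl_inr (v : V) (j : Fin p) : (genCorona G p).Adj (.inl v) (.inr (v, j)) :=
  Or.inr (Or.inl ⟨v, j, rfl, rfl⟩)

theorem edist_inl_le (a b : V) : (genCorona G p).edist (.inl a) (.inl b) ≤ G.edist a b := by
  rcases eq_or_ne (G.edist a b) ⊤ with h | h
  · simp [h]
  obtain ⟨w, hw⟩ := exists_walk_of_edist_ne_top h
  rw [← hw, ← w.length_map (inlHom G)]
  exact SimpleGraph.edist_le _

theorem edist_inl_base_le (u : V ⊕ V × Fin p) :
    (genCorona G p).edist (.inl (base u)) u ≤ level u := by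
  rcases u with v | ⟨v, j⟩
  · simp
  · simp [edist_eq_one_iff_adj.mpr (adj_inl_inr G v j)]

theorem edist_le (u v : V ⊕ V × Fin p) :
    (genCorona G p).edist u v ≤ G.edist (base u) (base v) + level u + level v :=
  calc (genCorona G p).edist u v
      ≤ (genCorona G p).edist u (.inl (base u)) +
          ((genCorona G p).edist (.inl (base u)) (.inl (base v)) +
            (genCorona G p).edist (.inl (base v)) v) :=
        SimpleGraph.edist_triangle.trans (add_le_add_right SimpleGraph.edist_triangle _)
    _ ≤ level u + (G.edist (base u) (base v) + level v) := by
        rw [SimpleGraph.edist_comm]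
        gcongr
        · exact edist_inl_base_le G u
        · exact edist_inl_le G _ _
        · exact edist_inl_base_le G v
    _ = _ := by ring

theorem le_edist {u v : V ⊕ V × Fin p} (huv : u ≠ v) :
    ((G.dist (base u) (base v) + level u + level v : ℕ) : ℕ∞) ≤ (genCorona G p).edist u v := by
  classical
  -- `f` is 1-Lipschitz, and `f v - f u` is the claimed distance for every `v ≠ u`.
  let f : V ⊕ V × Fin p → ℤ := fun x =>
    if x = u then -(level u : ℤ) else G.dist (base u) (base x) + level x
  have f_inl (x : V) : f (.inl x) = G.dist (base u) x := by
    by_cases hx : Sum.inl x = u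
    · subst hx; simp [f]
    · simp [f, hx]
  have f_inr (x : V) (j : Fin p) : (f (.inr (x, j)) - G.dist (base u) x).natAbs = 1 := by
    by_cases hx : Sum.inr (x, j) = u
    · subst hx; simp [f]
    · simp [f, hx]
  have hf : ∀ a b, (genCorona G p).Adj a b → (f a - f b).natAbs ≤ 1 := by
    rintro a b (⟨x, y, rfl, rfl, hxy⟩ | ⟨x, j, rfl, rfl⟩ | ⟨x, j, rfl, rfl⟩)
    · rw [f_inl, f_inl]
      rcases hxy.diff_dist_adj (u := base u) with h | h | h <;> omega
    · have := f_inr x j; rw [f_inl]; omega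
    · have := f_inr x j; rw [f_inl]; omega
  have key : (f u - f v).natAbs = G.dist (base u) (base v) + level u + level v := by
    simp only [f, if_pos rfl, if_neg (Ne.symm huv)]
    omega
  exact key ▸ natAbs_sub_le_edist hf u v

theorem edist_eq {u v : V ⊕ V × Fin p} (huv : u ≠ v) (h : G.Reachable (base u) (base v)) :
    (genCorona G p).edist u v = (G.dist (base u) (base v) + level u + level v : ℕ) :=
  le_antisymm (by simpa [← h.coe_dist_eq_edist] using edist_le G u v) (le_edist G huv)

end genCorona

namespace Fin

variable {n : ℕ}

def cycDist (i j : Fin n) : ℕ := min (j - i).val (i - j).val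

theorem cycDist_self (i : Fin n) : cycDist i i = 0 := by
  simp [cycDist, Fin.val_sub, Nat.sub_add_cancel i.isLt.le]

theorem val_sub_add_val_sub {i j : Fin n} (hij : i ≠ j) : (j - i).val + (i - j).val = n := by
  have := NeZero.of_pos i.pos
  rw [← neg_sub j i, Fin.val_neg, if_neg (sub_ne_zero.mpr hij.symm)]
  have := (j - i).isLt
  omega

theorem cycDist_pos {i j : Fin n} (hij : i ≠ j) : 0 < cycDist i j := by
  have := NeZero.of_pos i.pos
  have hji : (j - i).val ≠ 0 := fun h => hij (sub_eq_zero.mp (Fin.ext h)).symm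
  have hij' : (i - j).val ≠ 0 := fun h => hij (sub_eq_zero.mp (Fin.ext h))
  exact lt_min (Nat.pos_of_ne_zero hji) (Nat.pos_of_ne_zero hij')

theorem two_mul_cycDist_le (i j : Fin n) : 2 * cycDist i j ≤ n := by
  rcases eq_or_ne i j with rfl | hij
  · simp [cycDist_self]
  · have := val_sub_add_val_sub hij
    rw [cycDist]
    omega

theorem cycDist_of_lt {i j : Fin n} (hij : i < j) :
    cycDist i j = min (j.val - i.val) (n - (j.val - i.val)) := by
  have := val_sub_add_val_sub hij.ne
  rw [cycDist, Fin.sub_val_of_le hij.le] at *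
  omega

theorem natAbs_cycDist_add_one_sub_le [NeZero n] (i j : Fin n) :
    ((cycDist i (j + 1) : ℤ) - cycDist i j).natAbs ≤ 1 := by
  obtain ⟨m, rfl⟩ : ∃ m, n = m + 1 := ⟨n - 1, (Nat.succ_pred_eq_of_ne_zero (NeZero.ne n)).symm⟩
  have e₁ : j + 1 - i = (j - i) + 1 := by abel
  have e₂ : i - (j + 1) = -((j - i) + 1) := by abel
  have e₃ : i - j = -(j - i) := (neg_sub _ _).symm
  rw [cycDist, cycDist, e₁, e₂, e₃]
  clear e₁ e₂ e₃
  generalize j - i = a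
  have := a.isLt
  rw [Fin.val_neg a, Fin.val_neg (a + 1)]
  simp only [Fin.ext_iff, Fin.val_add_one, Fin.val_last, Fin.val_zero]
  split_ifs <;> first | contradiction | omega

theorem natAbs_cycDist_sub_le_of_adj (i : Fin n) {a b : Fin n} (hab : (cycleGraph n).Adj a b) :
    ((cycDist i a : ℤ) - cycDist i b).natAbs ≤ 1 := by
  have := NeZero.of_pos i.pos
  have eq_one {x : Fin n} (h : x.val = 1) : x = 1 := by
    ext; rw [h, Fin.val_one', Nat.mod_eq_of_lt (by omega)]
  rcases cycleGraph_adj'.mp hab with h | h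
  · obtain rfl : a = b + 1 := by rw [← eq_one h, add_sub_cancel]
    exact natAbs_cycDist_add_one_sub_le i b
  · obtain rfl : b = a + 1 := by rw [← eq_one h, add_sub_cancel]
    rw [← Int.natAbs_neg, neg_sub]
    exact natAbs_cycDist_add_one_sub_le i a

end Fin

open Fin genCorona

theorem SimpleGraph.cycleGraph_dist_add_one_le {n : ℕ} [NeZero n] (x : Fin n) :
    (cycleGraph n).dist x (x + 1) ≤ 1 := by
  rcases eq_or_ne n 1 with rfl | hn
  · simp
  · refine (dist_eq_one_iff_adj.mpr (cycleGraph_adj'.mpr (Or.inr ?_))).le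
    rw [add_sub_cancel_left, Fin.val_one', Nat.mod_eq_of_lt (by have := NeZero.ne n; omega)]

open Fin.NatCast in
theorem SimpleGraph.cycleGraph_dist_add_natCast_le {n : ℕ} [NeZero n] (x : Fin n) (k : ℕ) :
    (cycleGraph n).dist x (x + k) ≤ k := by
  induction k with
  | zero => simp
  | succ k ih =>
    rw [Nat.cast_succ, ← add_assoc]
    exact ((cycleGraph_preconnected _ _).dist_triangle_left _).trans
      (add_le_add ih (cycleGraph_dist_add_one_le _))

theorem SimpleGraph.cycleGraph_dist {n : ℕ} (i j : Fin n) :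
    (cycleGraph n).dist i j = cycDist i j := by
  have := NeZero.of_pos i.pos
  refine le_antisymm (le_min ?_ ?_) ?_
  · simpa using cycleGraph_dist_add_natCast_le i (j - i).val
  · simpa [SimpleGraph.dist_comm] using cycleGraph_dist_add_natCast_le j (i - j).val
  · have := natAbs_sub_le_edist (fun _ _ => natAbs_cycDist_sub_le_of_adj i) i j
    rw [← (cycleGraph_preconnected i j).coe_dist_eq_edist, cycDist_self] at this
    simpa using this

theorem edist_genCorona_cycleGraph {n p : ℕ} {u v : Fin n ⊕ Fin n × Fin p} (huv : u ≠ v) :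
    (genCorona (cycleGraph n) p).edist u v = (cycDist (base u) (base v) + level u + level v : ℕ) := by
  rw [edist_eq _ huv (cycleGraph_preconnected _ _), cycleGraph_dist]

theorem IsPackingColoring.mono {V : Type*} {G : SimpleGraph V} {k m : ℕ} {c : V → ℕ}
    (hc : IsPackingColoring G k c) (hkm : k ≤ m) : IsPackingColoring G m c :=
  ⟨fun v => ⟨(hc.1 v).1, (hc.1 v).2.trans hkm⟩, hc.2⟩

theorem packingChromaticNumber_eq_succ {V : Type*} {G : SimpleGraph V} {k : ℕ} {c : V → ℕ}
    (hc : IsPackingColoring G (k + 1) c) (h : ∀ c, ¬ IsPackingColoring G k c) :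
    packingChromaticNumber G = k + 1 := by
  refine le_antisymm (Nat.sInf_le ⟨c, hc⟩) (Nat.succ_le_of_lt (not_le.mp fun hle => ?_))
  obtain ⟨c', hc'⟩ := Nat.sInf_mem (s := {k | ∃ c, IsPackingColoring G k c}) ⟨_, c, hc⟩
  exact h c' (hc'.mono hle)

/-- `x` and `y` are the (hub, leaf) colors at two positions of the cycle at distance `t`; the
clauses are the packing conditions for the hub-hub, hub-leaf, leaf-hub and leaf-leaf pairs. -/
def Compatible (t : ℕ) (x y : ℕ × ℕ) : Prop :=
  (x.1 = y.1 → x.1 < t) ∧ (x.1 = y.2 → x.1 < t + 1) ∧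
    (x.2 = y.1 → x.2 < t + 1) ∧ (x.2 = y.2 → x.2 < t + 2)

instance (t : ℕ) (x y : ℕ × ℕ) : Decidable (Compatible t x y) := by
  unfold Compatible; infer_instance

def Admissible (k : ℕ) (x : ℕ × ℕ) : Prop :=
  1 ≤ x.1 ∧ x.1 ≤ k ∧ 1 ≤ x.2 ∧ x.2 ≤ k ∧ x.1 ≠ x.2

instance (k : ℕ) (x : ℕ × ℕ) : Decidable (Admissible k x) := by
  unfold Admissible; infer_instance

/-- Offsets `t > k` are harmless for colors `≤ k`, and for `2 * t ≤ n` the offset `t` is the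
cyclic distance. -/
def IsLocalPacking (n k : ℕ) (col : ℕ → ℕ × ℕ) : Prop :=
  ∀ i < n, Admissible k (col i) ∧
    ∀ t, 1 ≤ t → t ≤ k → 2 * t ≤ n → Compatible t (col i) (col ((i + t) % n))

instance (n k : ℕ) (col : ℕ → ℕ × ℕ) : Decidable (IsLocalPacking n k col) := by
  unfold IsLocalPacking; infer_instance

theorem Compatible.symm {t : ℕ} {x y : ℕ × ℕ} (h : Compatible t x y) : Compatible t y x := by
  obtain ⟨h₁, h₂, h₃, h₄⟩ := h
  refine ⟨fun e => ?_, fun e => ?_, fun e => ?_, fun e => ?_⟩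
  · have := h₁ e.symm; omega
  · have := h₃ e.symm; omega
  · have := h₂ e.symm; omega
  · have := h₄ e.symm; omega

theorem Compatible.mono {t t' : ℕ} {x y : ℕ × ℕ} (h : Compatible t x y) (htt' : t ≤ t') :
    Compatible t' x y := by
  obtain ⟨h₁, h₂, h₃, h₄⟩ := h
  exact ⟨fun e => by have := h₁ e; omega, fun e => by have := h₂ e; omega,
    fun e => by have := h₃ e; omega, fun e => by have := h₄ e; omega⟩

theorem Admissible.compatible {k t : ℕ} {x : ℕ × ℕ} (hx : Admissible k x) (hkt : k < t)
    (y : ℕ × ℕ) : Compatible t x y := by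
  obtain ⟨-, h₁, -, h₂, -⟩ := hx
  exact ⟨fun _ => by omega, fun _ => by omega, fun _ => by omega, fun _ => by omega⟩

section pattern

variable {n : ℕ}

def ofPattern (col : ℕ → ℕ × ℕ) : Fin n ⊕ Fin n × Fin 1 → ℕ
  | .inl i => (col i).1
  | .inr (i, _) => (col i).2

def toPattern (c : Fin n ⊕ Fin n × Fin 1 → ℕ) (i : ℕ) : ℕ × ℕ :=
  if h : i < n then (c (.inl ⟨i, h⟩), c (.inr (⟨i, h⟩, 0))) else (0, 0)

theorem ofPattern_toPattern (c : Fin n ⊕ Fin n × Fin 1 → ℕ) : ofPattern (toPattern c) = c := by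
  funext u
  rcases u with i | ⟨i, j⟩
  · simp [ofPattern, toPattern]
  · simp [ofPattern, toPattern, Subsingleton.elim j 0]

theorem compatible_iff_forall {t : ℕ} {col : ℕ → ℕ × ℕ} {i j : Fin n} :
    Compatible t (col i) (col j) ↔ ∀ u v : Fin n ⊕ Fin n × Fin 1, base u = i → base v = j →
      ofPattern col u = ofPattern col v → ofPattern col u < t + level u + level v := by
  constructor
  · rintro ⟨h₁, h₂, h₃, h₄⟩ (u | ⟨u, _⟩) (v | ⟨v, _⟩) rfl rfl
    exacts [h₁, h₂, h₃, h₄]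
  · intro h
    exact ⟨h (.inl i) (.inl j) rfl rfl, h (.inl i) (.inr (j, 0)) rfl rfl,
      h (.inr (i, 0)) (.inl j) rfl rfl, h (.inr (i, 0)) (.inr (j, 0)) rfl rfl⟩

theorem IsLocalPacking.compatible_cycDist {k : ℕ} {col : ℕ → ℕ × ℕ} (h : IsLocalPacking n k col)
    {i j : Fin n} (hij : i ≠ j) : Compatible (cycDist i j) (col i) (col j) := by
  have := NeZero.of_pos i.pos
  rcases lt_or_ge k (cycDist i j) with hk | hk
  · exact (h i i.isLt).1.compatible hk _
  have hpos := cycDist_pos hij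
  have hle := two_mul_cycDist_le i j
  rcases min_choice (j - i).val (i - j).val with e | e
  · have := (h i i.isLt).2 _ hpos hk hle
    rw [cycDist, e, ← Fin.val_add, add_sub_cancel] at this
    rwa [cycDist, e]
  · have := (h j j.isLt).2 _ hpos hk hle
    rw [cycDist, e, ← Fin.val_add, add_sub_cancel] at this
    rw [cycDist, e]
    exact this.symm

theorem isPackingColoring_ofPattern {k : ℕ} {col : ℕ → ℕ × ℕ} (h : IsLocalPacking n k col) :
    IsPackingColoring (genCorona (cycleGraph n) 1) k (ofPattern col) := by
  refine ⟨fun u => ?_, fun u v huv hc => ?_⟩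
  · obtain ⟨h₁, h₂, h₃, h₄, -⟩ := (h _ (base u).isLt).1
    rcases u with i | ⟨i, _⟩
    exacts [⟨h₁, h₂⟩, ⟨h₃, h₄⟩]
  rw [edist_genCorona_cycleGraph huv, Nat.cast_lt]
  rcases eq_or_ne (base u) (base v) with hb | hb
  · exfalso
    have hne := (h _ (base u).isLt).1.2.2.2.2
    rcases u with i | ⟨i, a⟩ <;> rcases v with j | ⟨j, b⟩ <;>
      simp only [base_inl, base_inr, ofPattern] at hb hc hne <;> subst hb
    · exact huv rfl
    · exact hne hc
    · exact hne hc.symm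
    · exact huv (by rw [Subsingleton.elim a b])
  · exact compatible_iff_forall.mp (h.compatible_cycDist hb) u v rfl rfl hc

theorem IsPackingColoring.isLocalPacking_toPattern {k : ℕ} {c : Fin n ⊕ Fin n × Fin 1 → ℕ}
    (hc : IsPackingColoring (genCorona (cycleGraph n) 1) k c) :
    IsLocalPacking n k (toPattern c) := by
  have lt_of_eq {u v} (huv : u ≠ v) (he : c u = c v) :
      c u < cycDist (base u) (base v) + level u + level v := by
    exact_mod_cast edist_genCorona_cycleGraph huv ▸ hc.2 u v huv he
  intro i hi
  have := NeZero.of_pos (show 0 < n by omega)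
  set a : Fin n := ⟨i, hi⟩
  refine ⟨?_, fun t ht₁ htk htn => ?_⟩
  · have hne : c (.inl a) ≠ c (.inr (a, 0)) := fun he => by
      have := lt_of_eq Sum.inl_ne_inr he
      have := (hc.1 (.inl a)).1
      simp only [base_inl, base_inr, level_inl, level_inr, cycDist_self] at *
      omega
    rw [toPattern, dif_pos hi]
    exact ⟨(hc.1 _).1, (hc.1 _).2, (hc.1 _).1, (hc.1 _).2, hne⟩
  set b : Fin n := ⟨(i + t) % n, Nat.mod_lt _ (by omega)⟩
  have hba : b - a = ⟨t, by omega⟩ := by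
    rw [sub_eq_iff_eq_add']; ext; simp [b, a, Fin.val_add]
  have hab : a ≠ b := fun e => by
    have := congrArg Fin.val hba
    simp only [e, sub_self, Fin.val_zero] at this
    omega
  have hdist : cycDist a b = t := by
    have := val_sub_add_val_sub hab
    rw [cycDist, hba] at *
    simp only at *
    omega
  have := compatible_iff_forall (t := t) (col := toPattern c) (i := a) (j := b)
  rw [ofPattern_toPattern] at this
  refine this.mpr fun u v hu hv he => ?_
  have := lt_of_eq (fun e => hab (hu ▸ hv ▸ congrArg base e)) he
  rwa [hu, hv, hdist] at this

end pattern

def palette (k : ℕ) : List (ℕ × ℕ) := List.product (List.range' 1 k) (List.range' 1 k)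

def canExtend (k : ℕ) (δ : ℕ → ℕ → ℕ) : ℕ → List (ℕ × ℕ) → Bool
  | 0, _ => true
  | m + 1, acc => (palette k).any fun x =>
      (x.1 != x.2 && (List.range acc.length).all fun q =>
        decide (Compatible (δ q acc.length) (acc.getD q (0, 0)) x)) &&
        canExtend k δ m (acc ++ [x])

theorem canExtend_map_range {k : ℕ} {δ : ℕ → ℕ → ℕ} {col : ℕ → ℕ × ℕ} {m L : ℕ}
    (hadm : ∀ p < L + m, Admissible k (col p))
    (hcomp : ∀ p < L + m, ∀ q < p, Compatible (δ q p) (col q) (col p)) :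
    canExtend k δ m ((List.range L).map col) = true := by
  induction m generalizing L with
  | zero => rfl
  | succ m ih =>
    obtain ⟨h₁, h₂, h₃, h₄, hne⟩ := hadm L (by omega)
    rw [canExtend, List.any_eq_true]
    refine ⟨col L, ?_, ?_⟩
    · exact List.mem_product.mpr ⟨List.mem_range'_1.mpr ⟨h₁, by omega⟩,
        List.mem_range'_1.mpr ⟨h₃, by omega⟩⟩
    simp only [Bool.and_eq_true, bne_iff_ne, List.all_eq_true, List.mem_range, List.length_map,
      List.length_range, decide_eq_true_eq]
    refine ⟨⟨hne, fun q hq => ?_⟩, ?_⟩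
    · rw [List.getD_eq_getElem _ _ (by simpa using hq), List.getElem_map, List.getElem_range]
      exact hcomp L (by omega) q hq
    · have := ih (L := L + 1) (fun p hp => hadm p (by omega)) (fun p hp => hcomp p (by omega))
      rwa [List.range_succ, List.map_append, List.map_singleton] at this

theorem IsLocalPacking.canExtend_cyclic {n k : ℕ} {col : ℕ → ℕ × ℕ}
    (h : IsLocalPacking n k col) :
    canExtend k (fun q p => min (p - q) (n - (p - q))) n [] = true := by
  refine canExtend_map_range (L := 0) (fun p hp => (h p (by omega)).1) fun p hp q hqp => ?_
  have := h.compatible_cycDist (i := ⟨q, by omega⟩) (j := ⟨p, by omega⟩) (by simp; omega)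
  rwa [cycDist_of_lt (by simpa using hqp)] at this

theorem IsLocalPacking.canExtend_window {n k N : ℕ} {col : ℕ → ℕ × ℕ}
    (h : IsLocalPacking n k col) (hN : N ≤ n) : canExtend k (fun q p => p - q) N [] = true := by
  refine canExtend_map_range (L := 0) (fun p hp => (h p (by omega)).1) fun p hp q hqp => ?_
  have := h.compatible_cycDist (i := ⟨q, by omega⟩) (j := ⟨p, by omega⟩) (by simp; omega)
  rw [cycDist_of_lt (by simpa using hqp)] at this
  exact this.mono (by simp only; omega)

theorem canExtend_cyclic_three : ∀ n < 5, 3 ≤ n →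
    canExtend 3 (fun q p => min (p - q) (n - (p - q))) n [] = false := by
  decide +kernel

theorem canExtend_cyclic_four : ∀ n < 10, 5 ≤ n →
    canExtend 4 (fun q p => min (p - q) (n - (p - q))) n [] = false := by
  decide +kernel

theorem canExtend_window_four : canExtend 4 (fun q p => p - q) 10 [] = false := by
  decide +kernel

theorem not_isLocalPacking_three {n : ℕ} (hn : n = 3 ∨ n = 4) (col : ℕ → ℕ × ℕ) :
    ¬ IsLocalPacking n 3 col := fun h => by
  simpa [canExtend_cyclic_three n (by omega) (by omega)] using h.canExtend_cyclic

theorem not_isLocalPacking_four {n : ℕ} (hn : 5 ≤ n) (col : ℕ → ℕ × ℕ) :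
    ¬ IsLocalPacking n 4 col := fun h => by
  rcases lt_or_ge n 10 with hn' | hn'
  · simpa [canExtend_cyclic_four n hn' hn] using h.canExtend_cyclic
  · simpa [canExtend_window_four] using h.canExtend_window hn'

def smallPattern (n i : ℕ) : ℕ × ℕ :=
  (if n = 3 then [(1, 2), (3, 1), (4, 1)] else [(1, 2), (3, 1), (1, 2), (4, 1)]).getD i (0, 0)

theorem isLocalPacking_smallPattern {n : ℕ} (hn : n = 3 ∨ n = 4) :
    IsLocalPacking n 4 (smallPattern n) := by
  rcases hn with rfl | rfl <;> decide +kernel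

def coronaPeriod : List (ℕ × ℕ) := [(1, 4), (2, 1), (1, 5), (3, 1)]

def coronaTail : ℕ → List (ℕ × ℕ)
  | 1 => [(1, 2), (4, 1), (1, 5), (2, 1), (3, 1)]
  | 2 => [(1, 2), (4, 1), (1, 2), (5, 1), (1, 2), (3, 1)]
  | 3 => [(1, 2), (4, 1), (1, 3), (2, 1), (5, 1), (1, 2), (3, 1)]
  | _ => coronaPeriod

def coronaPattern (n i : ℕ) : ℕ × ℕ :=
  if i + 4 + n % 4 < n then coronaPeriod.getD (i % 4) (0, 0)
  else (coronaTail (n % 4)).getD (i + 4 + n % 4 - n) (0, 0)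

theorem coronaPattern_add_four_add_four (n i : ℕ) :
    coronaPattern (n + 4) (i + 4) = coronaPattern n i := by
  have hmod : (n + 4) % 4 = n % 4 := by omega
  simp only [coronaPattern, hmod]
  split_ifs <;> first | omega | (congr 1; omega)

theorem coronaPattern_add_four_of_lt {n i : ℕ} (hi : i + 4 + n % 4 < n) :
    coronaPattern (n + 4) i = coronaPattern n i := by
  have hmod : (n + 4) % 4 = n % 4 := by omega
  simp only [coronaPattern, hmod, if_pos hi, if_pos (show i + 4 + n % 4 < n + 4 by omega)]

theorem isLocalPacking_coronaPattern_of_lt :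
    ∀ n < 20, 4 ≤ n → IsLocalPacking n 5 (coronaPattern n) := by
  decide +kernel

theorem IsLocalPacking.coronaPattern_add_four {n : ℕ} (hn : 16 ≤ n)
    (h : IsLocalPacking n 5 (coronaPattern n)) :
    IsLocalPacking (n + 4) 5 (coronaPattern (n + 4)) := by
  have hlt {q : ℕ} (hq : q < 9) : coronaPattern (n + 4) q = coronaPattern n q :=
    coronaPattern_add_four_of_lt (by omega)
  intro i hi
  rcases lt_or_ge i 4 with hi4 | hi4
  · refine ⟨by rw [hlt (by omega)]; exact (h i (by omega)).1, fun t ht₁ ht₅ _ => ?_⟩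
    have := (h i (by omega)).2 t ht₁ ht₅ (by omega)
    rwa [Nat.mod_eq_of_lt (by omega), hlt (by omega), hlt (by omega),
      ← Nat.mod_eq_of_lt (show i + t < n by omega)]
  obtain ⟨p, rfl⟩ : ∃ p, i = p + 4 := ⟨i - 4, by omega⟩
  rw [coronaPattern_add_four_add_four]
  refine ⟨(h p (by omega)).1, fun t ht₁ ht₅ _ => ?_⟩
  have := (h p (by omega)).2 t ht₁ ht₅ (by omega)
  rcases lt_or_ge (p + t) n with hpt | hpt
  · rw [Nat.mod_eq_of_lt (by omega), show p + 4 + t = p + t + 4 by omega,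
      coronaPattern_add_four_add_four]
    rwa [Nat.mod_eq_of_lt hpt] at this
  · have e₁ : (p + 4 + t) % (n + 4) = p + t - n := by
      rw [Nat.mod_eq_sub_mod (by omega), Nat.mod_eq_of_lt (by omega)]; omega
    have e₂ : (p + t) % n = p + t - n := by
      rw [Nat.mod_eq_sub_mod hpt, Nat.mod_eq_of_lt (by omega)]
    rwa [e₁, hlt (by omega), ← e₂]

theorem isLocalPacking_coronaPattern {n : ℕ} (hn : 4 ≤ n) :
    IsLocalPacking n 5 (coronaPattern n) := by
  induction n using Nat.strong_induction_on with
  | _ n ih =>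
    rcases lt_or_ge n 20 with h20 | h20
    · exact isLocalPacking_coronaPattern_of_lt n h20 hn
    · obtain ⟨m, rfl⟩ : ∃ m, n = m + 4 := ⟨n - 4, by omega⟩
      exact (ih m (by omega) (by omega)).coronaPattern_add_four (by omega)

theorem packing_chromatic_corona_cycle_general (n : ℕ) :
    ((n = 3 ∨ n = 4) → packingChromaticNumber (genCorona (cycleGraph n) 1) = 4) ∧
    (5 ≤ n → packingChromaticNumber (genCorona (cycleGraph n) 1) = 5) :=
  ⟨fun hn => packingChromaticNumber_eq_succ
      (isPackingColoring_ofPattern (isLocalPacking_smallPattern hn))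
      fun _ hc => not_isLocalPacking_three hn _ hc.isLocalPacking_toPattern,
    fun hn => packingChromaticNumber_eq_succ
      (isPackingColoring_ofPattern (isLocalPacking_coronaPattern (by omega)))
      fun _ hc => not_isLocalPacking_four hn _ hc.isLocalPacking_toPattern⟩

theorem packing_chromatic_corona_cycle (n : ℕ) (hn : 3 ≤ n) :
    ((n = 3 ∨ n = 4) → packingChromaticNumber (genCorona (cycleGraph n) 1) = 4) ∧
    (5 ≤ n → packingChromaticNumber (genCorona (cycleGraph n) 1) = 5) :=
  packing_chromatic_corona_cycle_general n
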